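/- For any integer k, the linear map φ_k : 𝔬₀ → 𝔬_k defined by φ_k(p∂_τ + q) = p∂_τ + (k/2)p′ + q is an isomorphism of Lie algebras that intertwines the weight-0 and weight-k Γ-actions: φ_k((a ∥₀ γ)) = φ_k(a) ∥_k γ for all a ∈ 𝔬₀ and γ ∈ Γ, and it restricts to an isomorphism 𝔡₀ ≅ 𝔡_k. -/

import Mathlib

/-- The automorphy factor `j_γ(τ) = cτ + d`. -/
noncomputable def jfac (γ : Matrix.SpecialLinearGroup (Fin 2) ℝ) (τ : ℂ) : ℂ :=
  (γ 1 0 : ℝ) * τ + (γ 1 1 : ℝ)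

/-- The Möbius action on the upper half plane. -/
noncomputable def moeb (γ : Matrix.SpecialLinearGroup (Fin 2) ℝ) (τ : ℂ) : ℂ :=
  ((γ 0 0 : ℝ) * τ + (γ 0 1 : ℝ)) / jfac γ τ

lemma det_rel (γ : Matrix.SpecialLinearGroup (Fin 2) ℝ) :
    (γ 0 0 : ℝ) * γ 1 1 - γ 0 1 * γ 1 0 = 1 := by
  have := γ.2
  rwa [Matrix.det_fin_two] at this

lemma det_relC (γ : Matrix.SpecialLinearGroup (Fin 2) ℝ) :
    ((γ 0 0 : ℝ) : ℂ) * ((γ 1 1 : ℝ) : ℂ) - ((γ 0 1 : ℝ) : ℂ) * ((γ 1 0 : ℝ) : ℂ) = 1 := by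
  exact_mod_cast congrArg (Complex.ofReal) (det_rel γ)

lemma jfac_ne (γ : Matrix.SpecialLinearGroup (Fin 2) ℝ) {τ : ℂ} (h : 0 < τ.im) :
    jfac γ τ ≠ 0 := by
  intro h0
  have him : (jfac γ τ).im = 0 := by rw [h0]; simp
  have hre : (jfac γ τ).re = 0 := by rw [h0]; simp
  simp [jfac, Complex.add_im, Complex.add_re, Complex.mul_im, Complex.mul_re] at him hre
  have hc : (γ 1 0 : ℝ) = 0 := by
    rcases him with h' | h'
    · exact h'
    · exact absurd h' (ne_of_gt h)
  rw [hc] at hre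
  simp at hre
  have := det_rel γ
  rw [hc, hre] at this
  simp at this

lemma im_moeb (γ : Matrix.SpecialLinearGroup (Fin 2) ℝ) {τ : ℂ} (h : 0 < τ.im) :
    0 < (moeb γ τ).im := by
  have hne := jfac_ne γ h
  have hpos : 0 < Complex.normSq (jfac γ τ) := Complex.normSq_pos.mpr hne
  have hd := det_rel γ
  have hnum : (((γ 0 0 : ℝ) : ℂ) * τ + ((γ 0 1 : ℝ) : ℂ)).im * (jfac γ τ).re -
      (((γ 0 0 : ℝ) : ℂ) * τ + ((γ 0 1 : ℝ) : ℂ)).re * (jfac γ τ).im = τ.im := by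
    simp only [jfac, Complex.add_im, Complex.add_re, Complex.mul_im, Complex.mul_re,
      Complex.ofReal_re, Complex.ofReal_im]
    linear_combination τ.im * hd
  have key : (moeb γ τ).im = τ.im / Complex.normSq (jfac γ τ) := by
    rw [moeb, Complex.div_im, div_sub_div_same, hnum]
  rw [key]
  positivity

lemma hasDerivAt_jfac (γ : Matrix.SpecialLinearGroup (Fin 2) ℝ) (τ : ℂ) :
    HasDerivAt (jfac γ) ((γ 1 0 : ℝ) : ℂ) τ := by
  have h := ((hasDerivAt_id τ).const_mul ((γ 1 0 : ℝ) : ℂ)).add_const ((γ 1 1 : ℝ) : ℂ)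
  rw [mul_one] at h
  exact h

lemma hasDerivAt_moeb (γ : Matrix.SpecialLinearGroup (Fin 2) ℝ) {τ : ℂ} (h : 0 < τ.im) :
    HasDerivAt (moeb γ) (1 / (jfac γ τ) ^ 2) τ := by
  have hne := jfac_ne γ h
  have hN : HasDerivAt (fun t : ℂ => ((γ 0 0 : ℝ) : ℂ) * t + ((γ 0 1 : ℝ) : ℂ))
      ((γ 0 0 : ℝ) : ℂ) τ := by
    simpa using ((hasDerivAt_id τ).const_mul ((γ 0 0 : ℝ) : ℂ)).add_const ((γ 0 1 : ℝ) : ℂ)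
  have hD := hN.div (hasDerivAt_jfac γ τ) hne
  have hnum : ((γ 0 0 : ℝ) : ℂ) * jfac γ τ -
      (((γ 0 0 : ℝ) : ℂ) * τ + ((γ 0 1 : ℝ) : ℂ)) * ((γ 1 0 : ℝ) : ℂ) = 1 := by
    rw [jfac]; linear_combination det_relC γ
  rw [hnum] at hD
  exact hD

/-- Commutator bracket on first-order operators `f∂ + g` (pairs `(f,g)`). -/
noncomputable def brk (a b : (ℂ → ℂ) × (ℂ → ℂ)) : (ℂ → ℂ) × (ℂ → ℂ) :=
  (fun τ => a.1 τ * deriv b.1 τ - b.1 τ * deriv a.1 τ,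
   fun τ => a.1 τ * deriv b.2 τ - b.1 τ * deriv a.2 τ)

/-- The weight-`k` action `(A₁, A₂) ∥_k γ = (j² A₁∘γ, k j' j A₁∘γ + A₂∘γ)` with `j'_γ = c`. -/
noncomputable def actk (k : ℤ) (γ : Matrix.SpecialLinearGroup (Fin 2) ℝ)
    (A : (ℂ → ℂ) × (ℂ → ℂ)) : (ℂ → ℂ) × (ℂ → ℂ) :=
  (fun τ => (jfac γ τ) ^ 2 * A.1 (moeb γ τ),
   fun τ => (k : ℂ) * ((γ 1 0 : ℝ) : ℂ) * jfac γ τ * A.1 (moeb γ τ) + A.2 (moeb γ τ))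

/-- `φ_k : 𝔬₀ → 𝔬_k`, `p∂ + q ↦ p∂ + (k/2)p' + q`. -/
noncomputable def phi (k : ℤ) (a : (ℂ → ℂ) × (ℂ → ℂ)) : (ℂ → ℂ) × (ℂ → ℂ) :=
  (a.1, fun τ => ((k : ℂ) / 2) * deriv a.1 τ + a.2 τ)

/-- Membership in `𝔡_k = {2p∂ + kp' : p ∈ ℂ[τ]_{≤2}}`. -/
def inD (k : ℤ) (a : (ℂ → ℂ) × (ℂ → ℂ)) : Prop :=
  ∃ p₂ p₁ p₀ : ℂ, (∀ τ : ℂ, a.1 τ = 2 * (p₂ * τ ^ 2 + p₁ * τ + p₀)) ∧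
    (∀ τ : ℂ, a.2 τ = (k : ℂ) * (2 * p₂ * τ + p₁))

/-- `φ_k : 𝔬₀ → 𝔬_k` is a Lie algebra isomorphism intertwining the weight-0 and weight-`k`
`Γ`-actions, and it restricts to an isomorphism `𝔡₀ ≅ 𝔡_k`. -/
theorem phi_isomorphism (k : ℤ) (Γ : Subgroup (Matrix.SpecialLinearGroup (Fin 2) ℝ)) :
    -- (i) linear bijection
    Function.Bijective (phi k) ∧
    -- (ii) intertwines the Γ-actions: φ_k (a ∥₀ γ) = (φ_k a) ∥_k γ
    (∀ γ ∈ Γ, ∀ a : (ℂ → ℂ) × (ℂ → ℂ),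
      (∀ τ : ℂ, 0 < τ.im → DifferentiableAt ℂ a.1 τ) →
      ∀ τ : ℂ, 0 < τ.im →
        (phi k (actk 0 γ a)).1 τ = (actk k γ (phi k a)).1 τ ∧
        (phi k (actk 0 γ a)).2 τ = (actk k γ (phi k a)).2 τ) ∧
    -- (iii) Lie algebra homomorphism
    (∀ a b : (ℂ → ℂ) × (ℂ → ℂ),
      (∀ τ : ℂ, 0 < τ.im → DifferentiableAt ℂ a.1 τ) →
      (∀ τ : ℂ, 0 < τ.im → DifferentiableAt ℂ (deriv a.1) τ) →
      (∀ τ : ℂ, 0 < τ.im → DifferentiableAt ℂ a.2 τ) →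
      (∀ τ : ℂ, 0 < τ.im → DifferentiableAt ℂ b.1 τ) →
      (∀ τ : ℂ, 0 < τ.im → DifferentiableAt ℂ (deriv b.1) τ) →
      (∀ τ : ℂ, 0 < τ.im → DifferentiableAt ℂ b.2 τ) →
      ∀ τ : ℂ, 0 < τ.im →
        (brk (phi k a) (phi k b)).1 τ = (phi k (brk a b)).1 τ ∧
        (brk (phi k a) (phi k b)).2 τ = (phi k (brk a b)).2 τ) ∧
    -- (iv) restricts to 𝔡₀ → 𝔡_k
    (∀ a : (ℂ → ℂ) × (ℂ → ℂ), inD 0 a → inD k (phi k a)) := by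
  refine ⟨?_, ?_, ?_, ?_⟩
  · -- (i) bijective, inverse is phi (-k)
    refine Function.bijective_iff_has_inverse.mpr ⟨phi (-k), fun a => ?_, fun a => ?_⟩
    · refine Prod.ext rfl (funext fun τ => ?_)
      show ((-k : ℤ) : ℂ) / 2 * deriv a.1 τ + ((k : ℂ) / 2 * deriv a.1 τ + a.2 τ) = a.2 τ
      push_cast; ring
    · refine Prod.ext rfl (funext fun τ => ?_)
      show ((k : ℤ) : ℂ) / 2 * deriv a.1 τ + (((-k : ℤ) : ℂ) / 2 * deriv a.1 τ + a.2 τ) = a.2 τ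
      push_cast; ring
  · -- (ii) intertwining
    intro γ _ a ha τ hτ
    refine ⟨rfl, ?_⟩
    have him := im_moeb γ hτ
    have hne := jfac_ne γ hτ
    have hcomp : HasDerivAt (fun t => a.1 (moeb γ t))
        (deriv a.1 (moeb γ τ) * (1 / jfac γ τ ^ 2)) τ :=
      ((ha _ him).hasDerivAt).comp τ (hasDerivAt_moeb γ hτ)
    have hpow : HasDerivAt (fun t => jfac γ t ^ 2)
        ((2 : ℕ) * jfac γ τ ^ 1 * ((γ 1 0 : ℝ) : ℂ)) τ := (hasDerivAt_jfac γ τ).pow 2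
    have hprod : HasDerivAt (fun t => jfac γ t ^ 2 * a.1 (moeb γ t)) _ τ := hpow.mul hcomp
    show ((k : ℂ) / 2) * deriv (fun t => jfac γ t ^ 2 * a.1 (moeb γ t)) τ +
        ((0 : ℤ) * ((γ 1 0 : ℝ) : ℂ) * jfac γ τ * a.1 (moeb γ τ) + a.2 (moeb γ τ)) =
        (k : ℂ) * ((γ 1 0 : ℝ) : ℂ) * jfac γ τ * a.1 (moeb γ τ) +
        ((k : ℂ) / 2 * deriv a.1 (moeb γ τ) + a.2 (moeb γ τ))
    rw [hprod.deriv]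
    push_cast
    field_simp
    ring
  · -- (iii) Lie algebra homomorphism
    intro a b ha1 ha1' ha2 hb1 hb1' hb2 τ hτ
    refine ⟨rfl, ?_⟩
    have dA : HasDerivAt (fun t => (k : ℂ) / 2 * deriv a.1 t + a.2 t)
        ((k : ℂ) / 2 * deriv (deriv a.1) τ + deriv a.2 τ) τ :=
      ((ha1' τ hτ).hasDerivAt.const_mul ((k : ℂ) / 2)).add (ha2 τ hτ).hasDerivAt
    have dB : HasDerivAt (fun t => (k : ℂ) / 2 * deriv b.1 t + b.2 t)
        ((k : ℂ) / 2 * deriv (deriv b.1) τ + deriv b.2 τ) τ :=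
      ((hb1' τ hτ).hasDerivAt.const_mul ((k : ℂ) / 2)).add (hb2 τ hτ).hasDerivAt
    have dC : HasDerivAt (fun t => a.1 t * deriv b.1 t - b.1 t * deriv a.1 t)
        ((deriv a.1 τ * deriv b.1 τ + a.1 τ * deriv (deriv b.1) τ) -
         (deriv b.1 τ * deriv a.1 τ + b.1 τ * deriv (deriv a.1) τ)) τ :=
      ((ha1 τ hτ).hasDerivAt.mul (hb1' τ hτ).hasDerivAt).sub
        ((hb1 τ hτ).hasDerivAt.mul (ha1' τ hτ).hasDerivAt)
    show a.1 τ * deriv (fun t => (k : ℂ) / 2 * deriv b.1 t + b.2 t) τ -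
        b.1 τ * deriv (fun t => (k : ℂ) / 2 * deriv a.1 t + a.2 t) τ =
        (k : ℂ) / 2 * deriv (fun t => a.1 t * deriv b.1 t - b.1 t * deriv a.1 t) τ +
        (a.1 τ * deriv b.2 τ - b.1 τ * deriv a.2 τ)
    rw [dA.deriv, dB.deriv, dC.deriv]
    ring
  · -- (iv) restriction to 𝔡
    rintro a ⟨p₂, p₁, p₀, h1, h2⟩
    refine ⟨p₂, p₁, p₀, h1, fun τ => ?_⟩
    have hfa : a.1 = fun t => 2 * (p₂ * t ^ 2 + p₁ * t + p₀) := funext h1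
    have hder : deriv a.1 τ = 2 * (2 * p₂ * τ + p₁) := by
      rw [hfa]
      have h : HasDerivAt (fun t : ℂ => 2 * (p₂ * t ^ 2 + p₁ * t + p₀))
          (2 * (2 * p₂ * τ + p₁)) τ := by
        have h0 := ((((hasDerivAt_pow 2 τ).const_mul p₂).add
          ((hasDerivAt_id τ).const_mul p₁)).add_const p₀).const_mul (2 : ℂ)
        refine h0.congr_deriv ?_
        push_cast; ring
      exact h.deriv
    show (k : ℂ) / 2 * deriv a.1 τ + a.2 τ = (k : ℂ) * (2 * p₂ * τ + p₁)
    rw [hder, h2]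
    push_cast; ring
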